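/- arXiv:2509.22941 — 2 statements merged into one kernel-verified Lean document; each statement's English description precedes it below -/
import Mathlib

section
/- Let $u>0$ solve the heat equation on $\mathbb{R}^n$, write $u=t^{-n/2}e^{-f}$ and set $D_0 = t(|\nabla f|^2 + f_t) + (tf)_t$. Then $\Box D_0 = -2\langle \nabla D_0, \nabla f\rangle - 2t\,|\mathrm{Hess}_f - \frac{1}{2t}\delta_{ij}|^2$. -/
open Real MeasureTheory Filter
open scoped RealInnerProductSpace

/-- The Euclidean Laplacian: sum of pure second derivatives in coordinate directions. -/
noncomputable def lap {n : ℕ} (g : EuclideanSpace ℝ (Fin n) → ℝ)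
    (x : EuclideanSpace ℝ (Fin n)) : ℝ :=
  ∑ i : Fin n, iteratedFDeriv ℝ 2 g x ![EuclideanSpace.single i 1, EuclideanSpace.single i 1]

/-- Entry `(i,j)` of the Hessian matrix of `g` at `x`. -/
noncomputable def hess {n : ℕ} (g : EuclideanSpace ℝ (Fin n) → ℝ)
    (x : EuclideanSpace ℝ (Fin n)) (i j : Fin n) : ℝ :=
  iteratedFDeriv ℝ 2 g x ![EuclideanSpace.single i 1, EuclideanSpace.single j 1]

open Set


noncomputable def pd {n : ℕ} (v : EuclideanSpace ℝ (Fin n) × ℝ)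
    (φ : EuclideanSpace ℝ (Fin n) × ℝ → ℝ) (p : EuclideanSpace ℝ (Fin n) × ℝ) : ℝ :=
  fderiv ℝ φ p v

def Om (n : ℕ) : Set (EuclideanSpace ℝ (Fin n) × ℝ) := Set.univ ×ˢ Set.Ioi (0:ℝ)

variable {n : ℕ} {φ b c : EuclideanSpace ℝ (Fin n) × ℝ → ℝ}
  {p v w : EuclideanSpace ℝ (Fin n) × ℝ}

lemma isOpen_Om : IsOpen (Om n) := isOpen_univ.prod isOpen_Ioi

lemma mem_Om {x : EuclideanSpace ℝ (Fin n)} {t : ℝ} (ht : 0 < t) : (x, t) ∈ Om n :=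
  ⟨trivial, ht⟩

lemma pd_smoothOn (hφ : ContDiffOn ℝ (⊤ : ℕ∞) φ (Om n)) (v : EuclideanSpace ℝ (Fin n) × ℝ) :
    ContDiffOn ℝ (⊤ : ℕ∞) (pd v φ) (Om n) := by
  have h1 : ContDiffOn ℝ (⊤ : ℕ∞) (fderiv ℝ φ) (Om n) :=
    hφ.fderiv_of_isOpen isOpen_Om (by simp)
  exact (ContinuousLinearMap.apply ℝ ℝ v).contDiff.comp_contDiffOn h1

lemma contDiffAt_of_mem (hφ : ContDiffOn ℝ (⊤ : ℕ∞) φ (Om n)) (hp : p ∈ Om n) :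
    ContDiffAt ℝ (⊤ : ℕ∞) φ p :=
  (hφ p hp).contDiffAt (isOpen_Om.mem_nhds hp)

lemma diffAt_of_mem (hφ : ContDiffOn ℝ (⊤ : ℕ∞) φ (Om n)) (hp : p ∈ Om n) :
    DifferentiableAt ℝ φ p :=
  (contDiffAt_of_mem hφ hp).differentiableAt (by simp)

lemma pd_diffAt (hφ : ContDiffOn ℝ (⊤ : ℕ∞) φ (Om n)) (hp : p ∈ Om n)
    (v : EuclideanSpace ℝ (Fin n) × ℝ) : DifferentiableAt ℝ (pd v φ) p :=
  diffAt_of_mem (pd_smoothOn hφ v) hp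

lemma pd_eq_snd (hd : DifferentiableAt ℝ (fderiv ℝ φ) p)
    (v w : EuclideanSpace ℝ (Fin n) × ℝ) :
    pd v (pd w φ) p = fderiv ℝ (fderiv ℝ φ) p v w := by
  unfold pd
  rw [fderiv_clm_apply hd (differentiableAt_const w)]
  simp

lemma pd_symm (hφ : ContDiffOn ℝ (⊤ : ℕ∞) φ (Om n)) (hp : p ∈ Om n)
    (v w : EuclideanSpace ℝ (Fin n) × ℝ) :
    pd v (pd w φ) p = pd w (pd v φ) p := by
  have hd : DifferentiableAt ℝ (fderiv ℝ φ) p := by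
    have := ((contDiffAt_of_mem hφ hp).fderiv_right (m := (⊤ : ℕ∞)) (by simp))
    exact this.differentiableAt (by simp)
  rw [pd_eq_snd hd, pd_eq_snd hd]
  exact (contDiffAt_of_mem hφ hp).isSymmSndFDerivAt (by rw [minSmoothness_of_isRCLikeNormedField]; exact WithTop.coe_le_coe.mpr (le_top : (2 : ℕ∞) ≤ ⊤)) v w

lemma pd_add (hb : DifferentiableAt ℝ b p) (hc : DifferentiableAt ℝ c p) :
    pd v (fun q => b q + c q) p = pd v b p + pd v c p := by
  unfold pd; rw [fderiv_fun_add hb hc]; rfl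

lemma pd_mul (hb : DifferentiableAt ℝ b p) (hc : DifferentiableAt ℝ c p) :
    pd v (fun q => b q * c q) p = c p * pd v b p + b p * pd v c p := by
  unfold pd; rw [fderiv_fun_mul hb hc]
  simp only [ContinuousLinearMap.add_apply, ContinuousLinearMap.smul_apply, smul_eq_mul]
  ring

lemma pd_sq (hb : DifferentiableAt ℝ b p) :
    pd v (fun q => b q ^ 2) p = 2 * b p * pd v b p := by
  have h : (fun q => b q ^ 2) = fun q => b q * b q := by ext q; ring
  rw [h, pd_mul hb hb]; ring

lemma pd_sum {ι : Type*} (s : Finset ι) {g : ι → EuclideanSpace ℝ (Fin n) × ℝ → ℝ}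
    (hb : ∀ i ∈ s, DifferentiableAt ℝ (g i) p) :
    pd v (fun q => ∑ i ∈ s, g i q) p = ∑ i ∈ s, pd v (g i) p := by
  unfold pd
  rw [(HasFDerivAt.fun_sum (fun i hi => (hb i hi).hasFDerivAt)).fderiv]
  simp

lemma pd_const (c : ℝ) : pd v (fun _ => c) p = 0 := by
  unfold pd; simp

lemma pd_const_mul (hb : DifferentiableAt ℝ b p) (c : ℝ) :
    pd v (fun q => c * b q) p = c * pd v b p := by
  rw [pd_mul (differentiableAt_const c) hb, pd_const]; ring

lemma pd_snd : pd v (fun q : EuclideanSpace ℝ (Fin n) × ℝ => q.2) p = v.2 := by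
  unfold pd
  rw [show (fun q : EuclideanSpace ℝ (Fin n) × ℝ => q.2) = Prod.snd from rfl, fderiv_snd]
  rfl

lemma pd_log (hb : DifferentiableAt ℝ b p) (hne : b p ≠ 0) :
    pd v (fun q => Real.log (b q)) p = pd v b p / b p := by
  unfold pd
  rw [(hb.hasFDerivAt.log hne).fderiv]
  simp [div_eq_inv_mul]

lemma pd_div_snd (c : ℝ) (hne : p.2 ≠ 0) :
    pd v (fun q : EuclideanSpace ℝ (Fin n) × ℝ => c / q.2) p = -(c * v.2) / p.2 ^ 2 := by
  unfold pd
  have h1 : HasFDerivAt (fun q : EuclideanSpace ℝ (Fin n) × ℝ => q.2)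
      (ContinuousLinearMap.snd ℝ _ ℝ) p := hasFDerivAt_snd
  have hg : HasDerivAt (fun s : ℝ => c / s) (-(c / p.2 ^ 2)) p.2 := by
    simpa [div_eq_mul_inv, mul_comm, neg_div] using ((hasDerivAt_inv hne).const_mul c)
  have h2 := hg.comp_hasFDerivAt p h1
  have h3 : HasFDerivAt (fun q : EuclideanSpace ℝ (Fin n) × ℝ => c / q.2)
      (-(c / p.2 ^ 2) • ContinuousLinearMap.snd ℝ _ ℝ) p := h2
  rw [h3.fderiv]
  simp only [ContinuousLinearMap.smul_apply, ContinuousLinearMap.coe_snd', smul_eq_mul]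
  field_simp

/-! ### Slice lemmas -/

noncomputable def eX {n : ℕ} (i : Fin n) : EuclideanSpace ℝ (Fin n) × ℝ :=
  (EuclideanSpace.single i 1, 0)

noncomputable def eT {n : ℕ} : EuclideanSpace ℝ (Fin n) × ℝ := (0, 1)

variable {x : EuclideanSpace ℝ (Fin n)} {t : ℝ}

lemma slice_fderiv (hφ : DifferentiableAt ℝ φ (x, t)) (v : EuclideanSpace ℝ (Fin n)) :
    fderiv ℝ (fun y => φ (y, t)) x v = pd (v, 0) φ (x, t) := by
  have h := hφ.hasFDerivAt.comp x (hasFDerivAt_prodMk_left (𝕜 := ℝ) x t)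
  have h' : HasFDerivAt (fun y => φ (y, t))
      ((fderiv ℝ φ (x, t)).comp (ContinuousLinearMap.inl ℝ (EuclideanSpace ℝ (Fin n)) ℝ)) x := h
  rw [h'.fderiv]
  rfl

lemma slice_deriv (hφ : DifferentiableAt ℝ φ (x, t)) :
    deriv (fun s => φ (x, s)) t = pd eT φ (x, t) := by
  have h := hφ.hasFDerivAt.comp t (hasFDerivAt_prodMk_right x t)
  have h' : HasFDerivAt (fun s => φ (x, s))
      ((fderiv ℝ φ (x, t)).comp (ContinuousLinearMap.inr ℝ (EuclideanSpace ℝ (Fin n)) ℝ)) t := h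
  rw [h'.hasDerivAt.deriv]
  rfl

lemma slice_contDiffAt (hφ : ContDiffOn ℝ (⊤ : ℕ∞) φ (Om n)) (ht : 0 < t) :
    ContDiffAt ℝ (⊤ : ℕ∞) (fun y => φ (y, t)) x := by
  exact (contDiffAt_of_mem hφ (mem_Om ht)).comp x (contDiffAt_id.prodMk contDiffAt_const)

lemma slice_hess (hφ : ContDiffOn ℝ (⊤ : ℕ∞) φ (Om n)) (ht : 0 < t) (i j : Fin n) :
    iteratedFDeriv ℝ 2 (fun y => φ (y, t)) x
      ![EuclideanSpace.single i 1, EuclideanSpace.single j 1] =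
      pd (eX i) (pd (eX j) φ) (x, t) := by
  set g := fun y => φ (y, t) with hg
  rw [iteratedFDeriv_two_apply]
  have hgd : DifferentiableAt ℝ (fderiv ℝ g) x := by
    have := (slice_contDiffAt hφ ht (x := x)).fderiv_right (m := (⊤ : ℕ∞)) (by simp)
    exact this.differentiableAt (by simp)
  have h1 : fderiv ℝ (fderiv ℝ g) x (EuclideanSpace.single i 1) (EuclideanSpace.single j 1)
      = fderiv ℝ (fun y => fderiv ℝ g y (EuclideanSpace.single j 1)) x
        (EuclideanSpace.single i 1) := by
    rw [fderiv_clm_apply hgd (differentiableAt_const _)]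
    simp
  have h2 : (fun y => fderiv ℝ g y (EuclideanSpace.single j 1)) =
      fun y => pd (eX j) φ (y, t) := by
    funext y
    exact slice_fderiv (diffAt_of_mem hφ (mem_Om ht)) _
  simp only [Matrix.cons_val_zero, Matrix.cons_val_one, Matrix.head_cons]
  rw [h1, h2, slice_fderiv (pd_diffAt hφ (mem_Om ht) (eX j)) _]
  rfl

/-! ### Gradient lemmas -/

open scoped RealInnerProductSpace

lemma inner_gradient (g : EuclideanSpace ℝ (Fin n) → ℝ) (x v : EuclideanSpace ℝ (Fin n)) :
    ⟪gradient g x, v⟫ = fderiv ℝ g x v := by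
  rw [gradient, ← InnerProductSpace.toDual_apply_apply, LinearIsometryEquiv.apply_symm_apply]

lemma gradient_apply (g : EuclideanSpace ℝ (Fin n) → ℝ) (x : EuclideanSpace ℝ (Fin n))
    (i : Fin n) : gradient g x i = fderiv ℝ g x (EuclideanSpace.single i 1) := by
  rw [← inner_gradient, real_inner_comm, EuclideanSpace.inner_single_left]
  simp

lemma inner_gradient_gradient (g h : EuclideanSpace ℝ (Fin n) → ℝ)
    (x : EuclideanSpace ℝ (Fin n)) :
    ⟪gradient g x, gradient h x⟫ = ∑ i, fderiv ℝ g x (EuclideanSpace.single i 1) *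
      fderiv ℝ h x (EuclideanSpace.single i 1) := by
  rw [PiLp.inner_apply]
  simp only [RCLike.inner_apply, conj_trivial, gradient_apply]
  exact Finset.sum_congr rfl fun i _ => mul_comm _ _

lemma norm_sq_gradient (g : EuclideanSpace ℝ (Fin n) → ℝ) (x : EuclideanSpace ℝ (Fin n)) :
    ‖gradient g x‖ ^ 2 = ∑ i, (fderiv ℝ g x (EuclideanSpace.single i 1)) ^ 2 := by
  rw [← real_inner_self_eq_norm_sq, inner_gradient_gradient]
  simp [sq]

/-! ### Core computation -/

lemma pd_congr (h : ∀ q ∈ Om n, b q = c q) (hp : p ∈ Om n) (v : EuclideanSpace ℝ (Fin n) × ℝ) :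
    pd v b p = pd v c p := by
  unfold pd
  rw [Filter.EventuallyEq.fderiv_eq (Filter.eventually_of_mem (isOpen_Om.mem_nhds hp) h)]

noncomputable def Gf {n : ℕ} (F : EuclideanSpace ℝ (Fin n) × ℝ → ℝ) :
    EuclideanSpace ℝ (Fin n) × ℝ → ℝ :=
  fun q => q.2 * ((∑ i, pd (eX i) F q ^ 2) + pd eT F q) + (F q + q.2 * pd eT F q)

variable {F : EuclideanSpace ℝ (Fin n) × ℝ → ℝ}

lemma diffAt_snd' : DifferentiableAt ℝ (fun q : EuclideanSpace ℝ (Fin n) × ℝ => q.2) p :=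
  differentiableAt_snd

lemma pd_Gf (hF : ContDiffOn ℝ (⊤ : ℕ∞) F (Om n)) (hp : p ∈ Om n)
    (v : EuclideanSpace ℝ (Fin n) × ℝ) :
    pd v (Gf F) p = v.2 * (∑ i, pd (eX i) F p ^ 2)
      + p.2 * (∑ i, 2 * pd (eX i) F p * pd v (pd (eX i) F) p)
      + 2 * v.2 * pd eT F p + 2 * p.2 * pd v (pd eT F) p + pd v F p := by
  have dA : ∀ i : Fin n, DifferentiableAt ℝ (pd (eX i) F) p := fun i => pd_diffAt hF hp _
  have dB : DifferentiableAt ℝ (pd eT F) p := pd_diffAt hF hp _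
  have dS : DifferentiableAt ℝ (fun q => ∑ i, pd (eX i) F q ^ 2) p :=
    DifferentiableAt.fun_sum (fun i _ => (dA i).fun_pow 2)
  have dF : DifferentiableAt ℝ F p := diffAt_of_mem hF hp
  unfold Gf
  rw [pd_add (diffAt_snd'.fun_mul (dS.fun_add dB)) (dF.fun_add (diffAt_snd'.fun_mul dB))]
  rw [pd_mul diffAt_snd' (dS.fun_add dB), pd_add dS dB, pd_add dF (diffAt_snd'.fun_mul dB),
    pd_mul diffAt_snd' dB, pd_snd, pd_sum Finset.univ (fun i _ => (dA i).fun_pow 2)]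
  have : ∀ i : Fin n, pd v (fun q => pd (eX i) F q ^ 2) p
      = 2 * pd (eX i) F p * pd v (pd (eX i) F) p := fun i => pd_sq (dA i)
  rw [Finset.sum_congr rfl (fun i _ => this i)]
  ring

lemma pd_sub (hb : DifferentiableAt ℝ b p) (hc : DifferentiableAt ℝ c p) :
    pd v (fun q => b q - c q) p = pd v b p - pd v c p := by
  unfold pd; rw [fderiv_fun_sub hb hc]; rfl

lemma pd_PDE (hF : ContDiffOn ℝ (⊤ : ℕ∞) F (Om n))
    (hPDE : ∀ q ∈ Om n, pd eT F q = (∑ i, pd (eX i) (pd (eX i) F) q)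
      - (∑ i, pd (eX i) F q ^ 2) - (n : ℝ) / (2 * q.2))
    (hp : p ∈ Om n) (v : EuclideanSpace ℝ (Fin n) × ℝ) :
    pd v (pd eT F) p = (∑ i, pd v (pd (eX i) (pd (eX i) F)) p)
      - (∑ i, 2 * pd (eX i) F p * pd v (pd (eX i) F) p) + ((n : ℝ) / 2 * v.2) / p.2 ^ 2 := by
  have dA : ∀ i : Fin n, DifferentiableAt ℝ (pd (eX i) F) p := fun i => pd_diffAt hF hp _
  have dA2 : ∀ i : Fin n, DifferentiableAt ℝ (pd (eX i) (pd (eX i) F)) p :=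
    fun i => pd_diffAt (pd_smoothOn hF _) hp _
  have dS1 : DifferentiableAt ℝ (fun q => ∑ i, pd (eX i) (pd (eX i) F) q) p :=
    DifferentiableAt.fun_sum (fun i _ => dA2 i)
  have dS2 : DifferentiableAt ℝ (fun q => ∑ i, pd (eX i) F q ^ 2) p :=
    DifferentiableAt.fun_sum (fun i _ => (dA i).fun_pow 2)
  have dQ : DifferentiableAt ℝ (fun q : EuclideanSpace ℝ (Fin n) × ℝ => ((n:ℝ)/2) / q.2) p := by
    have hne : p.2 ≠ 0 := ne_of_gt hp.2
    simp only [div_eq_mul_inv]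
    exact (diffAt_snd'.inv hne).const_mul _
  have h1 : ∀ q ∈ Om n, pd eT F q = (∑ i, pd (eX i) (pd (eX i) F) q)
      - (∑ i, pd (eX i) F q ^ 2) - ((n : ℝ) / 2) / q.2 := by
    intro q hq
    rw [hPDE q hq, div_div]
  rw [pd_congr h1 hp v, pd_sub (dS1.fun_sub dS2) dQ, pd_sub dS1 dS2,
    pd_sum Finset.univ (fun i _ => dA2 i), pd_sum Finset.univ (fun i _ => (dA i).fun_pow 2),
    pd_div_snd _ (ne_of_gt hp.2)]
  rw [Finset.sum_congr rfl (fun i _ => pd_sq (dA i))]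
  ring
lemma core (hF : ContDiffOn ℝ (⊤ : ℕ∞) F (Om n))
    (hPDE : ∀ q ∈ Om n, pd eT F q = (∑ i, pd (eX i) (pd (eX i) F) q)
      - (∑ i, pd (eX i) F q ^ 2) - (n : ℝ) / (2 * q.2))
    (hp : p ∈ Om n) :
    pd eT (Gf F) p - ∑ i, pd (eX i) (pd (eX i) (Gf F)) p
      = -2 * (∑ i, pd (eX i) (Gf F) p * pd (eX i) F p)
        - 2 * p.2 * ∑ i, ∑ j, (pd (eX i) (pd (eX j) F) p
            - (if i = j then 1 / (2 * p.2) else 0)) ^ 2 := by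
  have htpos : (0:ℝ) < p.2 := hp.2
  have hτ : p.2 ≠ 0 := ne_of_gt htpos
  have hA : ∀ v, ContDiffOn ℝ (⊤ : ℕ∞) (pd v F) (Om n) := pd_smoothOn hF
  have dA : ∀ i : Fin n, DifferentiableAt ℝ (pd (eX i) F) p := fun i => pd_diffAt hF hp _
  have dA2 : ∀ i j : Fin n, DifferentiableAt ℝ (pd (eX i) (pd (eX j) F)) p :=
    fun i j => pd_diffAt (hA (eX j)) hp _
  have dM : ∀ i : Fin n, DifferentiableAt ℝ (pd (eX i) (pd eT F)) p :=
    fun i => pd_diffAt (hA eT) hp _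
  have hswap : ∀ (i : Fin n), ∀ q ∈ Om n, pd eT (pd (eX i) F) q = pd (eX i) (pd eT F) q :=
    fun i q hq => pd_symm hF hq _ _
  have hsymA2 : ∀ (i j : Fin n), ∀ q ∈ Om n,
      pd (eX i) (pd (eX j) F) q = pd (eX j) (pd (eX i) F) q :=
    fun i j q hq => pd_symm hF hq _ _
  -- third-order symmetry
  have hC : ∀ i j : Fin n, pd (eX i) (pd (eX i) (pd (eX j) F)) p
      = pd (eX j) (pd (eX i) (pd (eX i) F)) p := by
    intro i j
    have h1 : pd (eX i) (pd (eX i) (pd (eX j) F)) p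
        = pd (eX i) (pd (eX j) (pd (eX i) F)) p :=
      pd_congr (fun q hq => hsymA2 i j q hq) hp _
    rw [h1]
    exact pd_symm (hA (eX i)) hp _ _
  have hTX : ∀ i : Fin n, pd eT (pd (eX i) (pd (eX i) F)) p
      = pd (eX i) (pd (eX i) (pd eT F)) p := by
    intro i
    have h1 : pd eT (pd (eX i) (pd (eX i) F)) p
        = pd (eX i) (pd eT (pd (eX i) F)) p := pd_symm (hA (eX i)) hp _ _
    rw [h1]
    exact pd_congr (hswap i) hp _
  -- spatial derivative of the PDE
  have hM : ∀ i : Fin n, pd (eX i) (pd eT F) p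
      = (∑ j, pd (eX i) (pd (eX j) (pd (eX j) F)) p)
        - 2 * ∑ j, pd (eX j) F p * pd (eX i) (pd (eX j) F) p := by
    intro i
    have h0 := pd_PDE hF hPDE hp (eX i)
    rw [show ((eX i : EuclideanSpace ℝ (Fin n) × ℝ)).2 = 0 from rfl] at h0
    rw [h0, Finset.sum_congr rfl (fun j _ => by ring :
      ∀ j ∈ Finset.univ, 2 * pd (eX j) F p * pd (eX i) (pd (eX j) F) p
        = 2 * (pd (eX j) F p * pd (eX i) (pd (eX j) F) p)),
      ← Finset.mul_sum]
    ring
  -- time derivative of the PDE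
  have hTT : pd eT (pd eT F) p
      = (∑ i, pd (eX i) (pd (eX i) (pd eT F)) p)
        - 2 * (∑ i, pd (eX i) F p * pd (eX i) (pd eT F) p)
        + ((n : ℝ) / 2) / p.2 ^ 2 := by
    have h0 := pd_PDE hF hPDE hp eT
    rw [show ((eT : EuclideanSpace ℝ (Fin n) × ℝ)).2 = 1 from rfl] at h0
    rw [h0, Finset.sum_congr rfl (fun i _ => hTX i)]
    rw [Finset.sum_congr rfl (fun i _ => by rw [hswap i p hp]; ring :
      ∀ i ∈ Finset.univ, 2 * pd (eX i) F p * pd eT (pd (eX i) F) p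
        = 2 * (pd (eX i) F p * pd (eX i) (pd eT F) p)),
      ← Finset.mul_sum]
    ring
  -- time derivative of G
  have E1 : pd eT (Gf F) p = (∑ i, pd (eX i) F p ^ 2)
      + 2 * p.2 * (∑ i, pd (eX i) F p * pd (eX i) (pd eT F) p)
      + 3 * pd eT F p + 2 * p.2 * pd eT (pd eT F) p := by
    have h0 := pd_Gf hF hp eT
    rw [show ((eT : EuclideanSpace ℝ (Fin n) × ℝ)).2 = 1 from rfl] at h0
    rw [h0, Finset.sum_congr rfl (fun i _ => by rw [hswap i p hp]; ring :
      ∀ i ∈ Finset.univ, 2 * pd (eX i) F p * pd eT (pd (eX i) F) p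
        = 2 * (pd (eX i) F p * pd (eX i) (pd eT F) p)),
      ← Finset.mul_sum]
    ring
  -- spatial first derivative of G, as a function on Om
  have hGX : ∀ i : Fin n, ∀ q ∈ Om n, pd (eX i) (Gf F) q
      = q.2 * (∑ j, 2 * pd (eX j) F q * pd (eX i) (pd (eX j) F) q)
        + (q.2 * (2 * pd (eX i) (pd eT F) q) + pd (eX i) F q) := by
    intro i q hq
    have h0 := pd_Gf hF hq (eX i)
    rw [show ((eX i : EuclideanSpace ℝ (Fin n) × ℝ)).2 = 0 from rfl] at h0
    rw [h0]; ring
  -- value of spatial derivative of G at p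
  have hGXp : ∀ i : Fin n, pd (eX i) (Gf F) p
      = p.2 * (∑ j, 2 * pd (eX j) F p * pd (eX i) (pd (eX j) F) p)
        + (p.2 * (2 * pd (eX i) (pd eT F) p) + pd (eX i) F p) := fun i => hGX i p hp
  -- second spatial derivatives of G
  have hGXX : ∀ i : Fin n, pd (eX i) (pd (eX i) (Gf F)) p
      = 2 * p.2 * (∑ j, pd (eX i) (pd (eX j) F) p ^ 2)
        + 2 * p.2 * (∑ j, pd (eX j) F p * pd (eX i) (pd (eX i) (pd (eX j) F)) p)
        + 2 * p.2 * pd (eX i) (pd (eX i) (pd eT F)) p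
        + pd (eX i) (pd (eX i) F) p := by
    intro i
    have hcongr : pd (eX i) (pd (eX i) (Gf F)) p
        = pd (eX i) (fun q => q.2 * (∑ j, 2 * pd (eX j) F q * pd (eX i) (pd (eX j) F) q)
          + (q.2 * (2 * pd (eX i) (pd eT F) q) + pd (eX i) F q)) p :=
      pd_congr (hGX i) hp _
    have dW : DifferentiableAt ℝ
        (fun q => ∑ j, 2 * pd (eX j) F q * pd (eX i) (pd (eX j) F) q) p :=
      DifferentiableAt.fun_sum (fun j _ => ((dA j).const_mul 2).fun_mul (dA2 i j))
    have dM2 : DifferentiableAt ℝ (fun q => 2 * pd (eX i) (pd eT F) q) p :=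
      (dM i).const_mul 2
    rw [hcongr,
      pd_add (diffAt_snd'.fun_mul dW) ((diffAt_snd'.fun_mul dM2).fun_add (dA i)),
      pd_mul diffAt_snd' dW,
      pd_add (diffAt_snd'.fun_mul dM2) (dA i),
      pd_mul diffAt_snd' dM2,
      pd_const_mul (dM i) 2,
      pd_sum Finset.univ (fun j _ => ((dA j).const_mul 2).fun_mul (dA2 i j))]
    simp only [pd_snd]
    rw [Finset.sum_congr rfl (fun j _ => by
        rw [pd_mul ((dA j).const_mul 2) (dA2 i j), pd_const_mul (dA j) 2] :
      ∀ j ∈ Finset.univ, pd (eX i) (fun q => 2 * pd (eX j) F q * pd (eX i) (pd (eX j) F) q) p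
        = pd (eX i) (pd (eX j) F) p * (2 * pd (eX i) (pd (eX j) F) p)
          + 2 * pd (eX j) F p * pd (eX i) (pd (eX i) (pd (eX j) F)) p)]
    have hsplit : ∑ j, (pd (eX i) (pd (eX j) F) p * (2 * pd (eX i) (pd (eX j) F) p)
          + 2 * pd (eX j) F p * pd (eX i) (pd (eX i) (pd (eX j) F)) p)
        = 2 * (∑ j, pd (eX i) (pd (eX j) F) p ^ 2)
          + 2 * (∑ j, pd (eX j) F p * pd (eX i) (pd (eX i) (pd (eX j) F)) p) := by
      rw [Finset.mul_sum, Finset.mul_sum, ← Finset.sum_add_distrib]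
      exact Finset.sum_congr rfl (fun j _ => by ring)
    rw [hsplit, show ((eX i : EuclideanSpace ℝ (Fin n) × ℝ)).2 = 0 from rfl]
    ring
  -- swap double sum of third derivatives
  have hY : ∑ i : Fin n, ∑ j : Fin n, pd (eX j) F p * pd (eX i) (pd (eX i) (pd (eX j) F)) p
      = ∑ i : Fin n, ∑ j : Fin n, pd (eX i) F p * pd (eX i) (pd (eX j) (pd (eX j) F)) p := by
    rw [Finset.sum_congr rfl (fun i _ => Finset.sum_congr rfl (fun j _ => by rw [hC i j]) :
      ∀ i ∈ Finset.univ, ∑ j : Fin n, pd (eX j) F p * pd (eX i) (pd (eX i) (pd (eX j) F)) p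
        = ∑ j : Fin n, pd (eX j) F p * pd (eX j) (pd (eX i) (pd (eX i) F)) p)]
    exact Finset.sum_comm ..
  have E2 : ∑ i, pd (eX i) (pd (eX i) (Gf F)) p
      = 2 * p.2 * (∑ i : Fin n, ∑ j : Fin n, pd (eX i) (pd (eX j) F) p ^ 2)
        + 2 * p.2 * (∑ i : Fin n, ∑ j : Fin n,
            pd (eX i) F p * pd (eX i) (pd (eX j) (pd (eX j) F)) p)
        + 2 * p.2 * (∑ i, pd (eX i) (pd (eX i) (pd eT F)) p)
        + ∑ i, pd (eX i) (pd (eX i) F) p := by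
    rw [Finset.sum_congr rfl (fun i _ => hGXX i), Finset.sum_add_distrib,
      Finset.sum_add_distrib, Finset.sum_add_distrib, ← Finset.mul_sum, ← Finset.mul_sum,
      ← Finset.mul_sum, hY]
  have E3 : ∑ i, pd (eX i) (Gf F) p * pd (eX i) F p
      = 2 * p.2 * (∑ i : Fin n, ∑ j : Fin n,
            pd (eX i) F p * (pd (eX j) F p * pd (eX i) (pd (eX j) F) p))
        + 2 * p.2 * (∑ i, pd (eX i) F p * pd (eX i) (pd eT F) p)
        + ∑ i, pd (eX i) F p ^ 2 := by
    rw [Finset.sum_congr rfl (fun i _ => by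
        rw [hGXp i]
        rw [show (p.2 * (∑ j, 2 * pd (eX j) F p * pd (eX i) (pd (eX j) F) p)
            + (p.2 * (2 * pd (eX i) (pd eT F) p) + pd (eX i) F p)) * pd (eX i) F p
          = p.2 * (pd (eX i) F p * (∑ j, 2 * pd (eX j) F p * pd (eX i) (pd (eX j) F) p))
            + (2 * p.2 * (pd (eX i) F p * pd (eX i) (pd eT F) p) + pd (eX i) F p ^ 2)
          from by ring]
        rw [show pd (eX i) F p * (∑ j, 2 * pd (eX j) F p * pd (eX i) (pd (eX j) F) p)
          = 2 * ∑ j, pd (eX i) F p * (pd (eX j) F p * pd (eX i) (pd (eX j) F) p) from by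
          rw [Finset.mul_sum, Finset.mul_sum]
          exact Finset.sum_congr rfl (fun j _ => by ring)]
        ring :
      ∀ i ∈ Finset.univ, pd (eX i) (Gf F) p * pd (eX i) F p
        = 2 * p.2 * (∑ j, pd (eX i) F p * (pd (eX j) F p * pd (eX i) (pd (eX j) F) p))
          + 2 * p.2 * (pd (eX i) F p * pd (eX i) (pd eT F) p) + pd (eX i) F p ^ 2)]
    rw [Finset.sum_add_distrib, Finset.sum_add_distrib, ← Finset.mul_sum, ← Finset.mul_sum]
  have E6 : ∑ i, pd (eX i) F p * pd (eX i) (pd eT F) p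
      = (∑ i : Fin n, ∑ j : Fin n, pd (eX i) F p * pd (eX i) (pd (eX j) (pd (eX j) F)) p)
        - 2 * (∑ i : Fin n, ∑ j : Fin n,
            pd (eX i) F p * (pd (eX j) F p * pd (eX i) (pd (eX j) F) p)) := by
    rw [Finset.sum_congr rfl (fun i _ => by
        rw [hM i, mul_sub, Finset.mul_sum]
        rw [show pd (eX i) F p * (2 * ∑ j, pd (eX j) F p * pd (eX i) (pd (eX j) F) p)
          = 2 * ∑ j, pd (eX i) F p * (pd (eX j) F p * pd (eX i) (pd (eX j) F) p) from by
          rw [Finset.mul_sum, Finset.mul_sum, Finset.mul_sum]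
          exact Finset.sum_congr rfl (fun j _ => by ring)] :
      ∀ i ∈ Finset.univ, pd (eX i) F p * pd (eX i) (pd eT F) p
        = (∑ j, pd (eX i) F p * pd (eX i) (pd (eX j) (pd (eX j) F)) p)
          - 2 * ∑ j, pd (eX i) F p * (pd (eX j) F p * pd (eX i) (pd (eX j) F) p))]
    rw [Finset.sum_sub_distrib, ← Finset.mul_sum]
  have E4 : ∀ i : Fin n, ∑ j, (pd (eX i) (pd (eX j) F) p
        - (if i = j then 1 / (2 * p.2) else 0)) ^ 2
      = (∑ j, pd (eX i) (pd (eX j) F) p ^ 2)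
        - pd (eX i) (pd (eX i) F) p / p.2 + 1 / (4 * p.2 ^ 2) := by
    intro i
    rw [Finset.sum_congr rfl (fun j _ => by
        split_ifs with h
        · subst h; field_simp; ring
        · simp :
      ∀ j ∈ Finset.univ, (pd (eX i) (pd (eX j) F) p
          - (if i = j then 1 / (2 * p.2) else 0)) ^ 2
        = pd (eX i) (pd (eX j) F) p ^ 2 - (if i = j then
            pd (eX i) (pd (eX j) F) p / p.2 - 1 / (4 * p.2 ^ 2) else 0))]
    rw [Finset.sum_sub_distrib, Finset.sum_ite_eq]
    simp
    ring
  have E5 : ∑ i : Fin n, ∑ j, (pd (eX i) (pd (eX j) F) p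
        - (if i = j then 1 / (2 * p.2) else 0)) ^ 2
      = (∑ i : Fin n, ∑ j : Fin n, pd (eX i) (pd (eX j) F) p ^ 2)
        - (∑ i, pd (eX i) (pd (eX i) F) p) / p.2 + (n : ℝ) / (4 * p.2 ^ 2) := by
    rw [Finset.sum_congr rfl (fun i _ => E4 i), Finset.sum_add_distrib,
      Finset.sum_sub_distrib, ← Finset.sum_div, Finset.sum_const, Finset.card_univ,
      Fintype.card_fin, nsmul_eq_mul]
    ring
  rw [E1, hTT, E2, E3, E5, E6, hPDE p hp]
  field_simp
  ring

lemma pd_neg : pd v (fun q => -(b q)) p = -pd v b p := by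
  unfold pd; rw [fderiv_fun_neg]; rfl

lemma pd_inv (hc : DifferentiableAt ℝ c p) (hne : c p ≠ 0) :
    pd v (fun q => (c q)⁻¹) p = -(pd v c p) / c p ^ 2 := by
  unfold pd
  have h := (hasDerivAt_inv hne).comp_hasFDerivAt p hc.hasFDerivAt
  have h' : HasFDerivAt (fun q => (c q)⁻¹) (-(c p ^ 2)⁻¹ • fderiv ℝ c p) p := h
  rw [h'.fderiv]
  simp only [ContinuousLinearMap.smul_apply, smul_eq_mul]
  field_simp

lemma diffAt_inv (hc : DifferentiableAt ℝ c p) (hne : c p ≠ 0) :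
    DifferentiableAt ℝ (fun q => (c q)⁻¹) p :=
  ((hasDerivAt_inv hne).comp_hasFDerivAt p hc.hasFDerivAt).differentiableAt

lemma pd_div (hb : DifferentiableAt ℝ b p) (hc : DifferentiableAt ℝ c p) (hne : c p ≠ 0) :
    pd v (fun q => b q / c q) p = (pd v b p * c p - b p * pd v c p) / c p ^ 2 := by
  have h : (fun q => b q / c q) = fun q => b q * (c q)⁻¹ := by
    funext q; rw [div_eq_mul_inv]
  rw [h, pd_mul hb (diffAt_inv hc hne), pd_inv hc hne]
  field_simp
  ring

lemma pd_log_snd (hne : p.2 ≠ 0) :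
    pd v (fun q : EuclideanSpace ℝ (Fin n) × ℝ => Real.log q.2) p = v.2 / p.2 := by
  unfold pd
  have h := (Real.hasDerivAt_log hne).comp_hasFDerivAt p
    (hasFDerivAt_snd (𝕜 := ℝ) (E := EuclideanSpace ℝ (Fin n)) (F := ℝ))
  have h' : HasFDerivAt (fun q : EuclideanSpace ℝ (Fin n) × ℝ => Real.log q.2)
      (p.2⁻¹ • ContinuousLinearMap.snd ℝ (EuclideanSpace ℝ (Fin n)) ℝ) p := h
  rw [h'.fderiv]
  simp only [ContinuousLinearMap.smul_apply, ContinuousLinearMap.coe_snd', smul_eq_mul]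
  rw [inv_mul_eq_div]

/-- If `u > 0` solves the heat equation on `ℝⁿ`, `u = t^(-n/2) e^(-f)` and
`D₀ = t(|∇f|² + fₜ) + (tf)ₜ`, then
`□ D₀ = -2⟨∇D₀, ∇f⟩ - 2t |Hess_f - δᵢⱼ/(2t)|²`. -/
theorem stmt_8 (n : ℕ) (u f D₀ : EuclideanSpace ℝ (Fin n) → ℝ → ℝ)
    (hsmooth : ContDiffOn ℝ (⊤ : ℕ∞) (fun p : EuclideanSpace ℝ (Fin n) × ℝ => u p.1 p.2)
      (Set.univ ×ˢ Set.Ioi (0 : ℝ)))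
    (hpos : ∀ x t, 0 < t → 0 < u x t)
    (heat : ∀ x t, 0 < t → deriv (u x) t = lap (fun y => u y t) x)
    (hf : ∀ x t, 0 < t → u x t = t ^ (-(n : ℝ) / 2) * Real.exp (-(f x t)))
    (hD₀ : ∀ x t, 0 < t → D₀ x t =
      t * (‖gradient (fun y => f y t) x‖ ^ 2 + deriv (f x) t) + (f x t + t * deriv (f x) t))
    (x : EuclideanSpace ℝ (Fin n)) (t : ℝ) (ht : 0 < t) :
    deriv (D₀ x) t - lap (fun y => D₀ y t) x =
      -2 * ⟪gradient (fun y => D₀ y t) x, gradient (fun y => f y t) x⟫ -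
        2 * t * (∑ i, ∑ j, (hess (fun y => f y t) x i j -
          (if i = j then 1 / (2 * t) else 0)) ^ 2) := by
  have hUsm : ContDiffOn ℝ (⊤ : ℕ∞) (fun p : EuclideanSpace ℝ (Fin n) × ℝ => u p.1 p.2) (Om n) :=
    hsmooth
  set U : EuclideanSpace ℝ (Fin n) × ℝ → ℝ := fun p => u p.1 p.2 with hUdef
  have hUpos : ∀ q ∈ Om n, 0 < U q := fun q hq => hpos q.1 q.2 hq.2
  have hUne : ∀ q ∈ Om n, U q ≠ 0 := fun q hq => ne_of_gt (hUpos q hq)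
  set Fd : EuclideanSpace ℝ (Fin n) × ℝ → ℝ :=
    fun q => -Real.log (U q) - (n : ℝ) / 2 * Real.log q.2 with hFdef
  have hlogt : ContDiffOn ℝ (⊤ : ℕ∞) (fun q : EuclideanSpace ℝ (Fin n) × ℝ => Real.log q.2) (Om n) :=
    (contDiff_snd.contDiffOn).log (fun q hq => ne_of_gt hq.2)
  have hFsm : ContDiffOn ℝ (⊤ : ℕ∞) Fd (Om n) :=
    ((hUsm.log hUne).neg).sub (contDiffOn_const.mul hlogt)
  -- f agrees with Fd on Om
  have hfF : ∀ y s, 0 < s → f y s = Fd (y, s) := by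
    intro y s hs
    have h1 : Real.log (u y s) = (-(n : ℝ) / 2) * Real.log s + (-(f y s)) := by
      rw [hf y s hs, Real.log_mul (ne_of_gt (Real.rpow_pos_of_pos hs _)) (Real.exp_ne_zero _),
        Real.log_rpow hs, Real.log_exp]
    have h2 : Fd (y, s) = -Real.log (u y s) - (n : ℝ) / 2 * Real.log s := rfl
    rw [h2, h1]; ring
  -- the heat equation in partial-derivative form
  have heatQ : ∀ q ∈ Om n, pd eT U q = ∑ i, pd (eX i) (pd (eX i) U) q := by
    rintro ⟨y, s⟩ hq
    have hs : 0 < s := hq.2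
    have h2 : deriv (u y) s = pd eT U (y, s) := slice_deriv (diffAt_of_mem hUsm hq)
    have h3 : lap (fun z => u z s) y = ∑ i, pd (eX i) (pd (eX i) U) (y, s) := by
      unfold lap
      refine Finset.sum_congr rfl fun i _ => ?_
      exact slice_hess hUsm hs i i
    rw [← h2, heat y s hs, h3]
  -- first derivatives of Fd
  have hFdv : ∀ q ∈ Om n, ∀ v, pd v Fd q
      = -(pd v U q / U q) - (n : ℝ) / 2 * (v.2 / q.2) := by
    intro q hq v
    have dlogU : DifferentiableAt ℝ (fun r => Real.log (U r)) q :=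
      diffAt_of_mem (hUsm.log hUne) hq
    have dlogt : DifferentiableAt ℝ
        (fun r : EuclideanSpace ℝ (Fin n) × ℝ => Real.log r.2) q := diffAt_of_mem hlogt hq
    have h0 : pd v Fd q = pd v (fun r => -Real.log (U r)) q
        - pd v (fun r : EuclideanSpace ℝ (Fin n) × ℝ => (n : ℝ) / 2 * Real.log r.2) q :=
      pd_sub dlogU.fun_neg (dlogt.const_mul _)
    rw [h0, pd_neg, pd_log (diffAt_of_mem hUsm hq) (hUne q hq),
      pd_const_mul dlogt, pd_log_snd (ne_of_gt hq.2)]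
  have hFdX : ∀ (i : Fin n), ∀ r ∈ Om n, pd (eX i) Fd r = -(pd (eX i) U r / U r) := by
    intro i r hr
    rw [hFdv r hr (eX i), show ((eX i : EuclideanSpace ℝ (Fin n) × ℝ)).2 = 0 from rfl]
    simp
  -- the PDE satisfied by Fd
  have hPDE : ∀ q ∈ Om n, pd eT Fd q = (∑ i, pd (eX i) (pd (eX i) Fd) q)
      - (∑ i, pd (eX i) Fd q ^ 2) - (n : ℝ) / (2 * q.2) := by
    intro q hq
    have hUneq : U q ≠ 0 := hUne q hq
    have hFdXX : ∀ i : Fin n, pd (eX i) (pd (eX i) Fd) q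
        = pd (eX i) U q ^ 2 / U q ^ 2 - pd (eX i) (pd (eX i) U) q / U q := by
      intro i
      rw [pd_congr (hFdX i) hq, pd_neg,
        pd_div (pd_diffAt hUsm hq (eX i)) (diffAt_of_mem hUsm hq) hUneq]
      field_simp
      ring
    rw [hFdv q hq eT, show ((eT : EuclideanSpace ℝ (Fin n) × ℝ)).2 = 1 from rfl,
      Finset.sum_congr rfl (fun i _ => hFdXX i),
      Finset.sum_congr rfl (fun i _ => by rw [hFdX i q hq]; ring :
        ∀ i ∈ Finset.univ, pd (eX i) Fd q ^ 2 = pd (eX i) U q ^ 2 / U q ^ 2),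
      Finset.sum_sub_distrib, ← Finset.sum_div, ← Finset.sum_div, ← heatQ q hq]
    field_simp
    ring
  -- smoothness of Gf Fd
  have hGsm : ContDiffOn ℝ (⊤ : ℕ∞) (Gf Fd) (Om n) := by
    have h1 : ContDiffOn ℝ (⊤ : ℕ∞) (fun q : EuclideanSpace ℝ (Fin n) × ℝ => q.2) (Om n) :=
      contDiff_snd.contDiffOn
    have hS : ContDiffOn ℝ (⊤ : ℕ∞) (fun q => ∑ i, pd (eX i) Fd q ^ 2) (Om n) :=
      ContDiffOn.sum fun i _ => (pd_smoothOn hFsm (eX i)).pow 2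
    have hBt : ContDiffOn ℝ (⊤ : ℕ∞) (pd eT Fd) (Om n) := pd_smoothOn hFsm eT
    exact (h1.mul (hS.add hBt)).add (hFsm.add (h1.mul hBt))
  -- D₀ agrees with Gf Fd on Om
  have hD0 : ∀ y s, 0 < s → D₀ y s = Gf Fd (y, s) := by
    intro y s hs
    have hg : (fun z => f z s) = fun z => Fd (z, s) := funext fun z => hfF z s hs
    have hderivf : deriv (f y) s = pd eT Fd (y, s) := by
      have he : f y =ᶠ[nhds s] fun r => Fd (y, r) :=
        Filter.eventually_of_mem (Ioi_mem_nhds hs) (fun r hr => hfF y r hr)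
      rw [he.deriv_eq]
      exact slice_deriv (diffAt_of_mem hFsm (mem_Om hs))
    have hnorm : ‖gradient (fun z => f z s) y‖ ^ 2 = ∑ i, pd (eX i) Fd (y, s) ^ 2 := by
      rw [hg, norm_sq_gradient]
      exact Finset.sum_congr rfl fun i _ => by
        rw [slice_fderiv (diffAt_of_mem hFsm (mem_Om hs))]
        rfl
    rw [hD₀ y s hs, hnorm, hderivf, hfF y s hs]
    rfl
  -- final assembly
  have hp : (x, t) ∈ Om n := mem_Om ht
  have hkey := core hFsm hPDE hp
  have hgfun : (fun y => f y t) = fun y => Fd (y, t) := funext fun y => hfF y t ht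
  have hDfun : (fun y => D₀ y t) = fun y => Gf Fd (y, t) := funext fun y => hD0 y t ht
  have g1 : deriv (D₀ x) t = pd eT (Gf Fd) (x, t) := by
    have he : D₀ x =ᶠ[nhds t] fun s => Gf Fd (x, s) :=
      Filter.eventually_of_mem (Ioi_mem_nhds ht) (fun s hs => hD0 x s hs)
    rw [he.deriv_eq]
    exact slice_deriv (diffAt_of_mem hGsm hp)
  have g2 : lap (fun y => D₀ y t) x = ∑ i, pd (eX i) (pd (eX i) (Gf Fd)) (x, t) := by
    rw [hDfun]
    unfold lap
    exact Finset.sum_congr rfl fun i _ => slice_hess hGsm ht i i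
  have g3 : ∀ i j : Fin n, hess (fun y => f y t) x i j = pd (eX i) (pd (eX j) Fd) (x, t) := by
    intro i j
    rw [hgfun]
    exact slice_hess hFsm ht i j
  have g4 : ⟪gradient (fun y => D₀ y t) x, gradient (fun y => f y t) x⟫
      = ∑ i, pd (eX i) (Gf Fd) (x, t) * pd (eX i) Fd (x, t) := by
    rw [hDfun, hgfun, inner_gradient_gradient]
    exact Finset.sum_congr rfl fun i _ => by
      rw [slice_fderiv (diffAt_of_mem hGsm hp), slice_fderiv (diffAt_of_mem hFsm hp)]
      rfl
  rw [g1, g2, g4,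
    Finset.sum_congr rfl (fun i _ => Finset.sum_congr rfl (fun j _ => by rw [g3 i j]) :
      ∀ i ∈ Finset.univ, ∑ j, (hess (fun y => f y t) x i j
          - (if i = j then 1 / (2 * t) else 0)) ^ 2
        = ∑ j, (pd (eX i) (pd (eX j) Fd) (x, t) - (if i = j then 1 / (2 * t) else 0)) ^ 2)]
  exact hkey
end

section
/- Let $u>0$ be a smooth solution of the heat equation on $\mathbb{R}^n \times (0,\infty)$, $m = n + N$, and define $v(x,y) = (2N)^{-n/2}|y|^{2-N} u(x, |y|^2/(2N))$ on $\mathbb{R}^n \times (\mathbb{R}^N \setminus \{0\})$. Then $\frac{\Delta v}{v} = \frac{4 u_t}{N u} + \frac{2\tau u_{tt}}{N u}$, where $\tau = |y|^2/(2N)$ and $u, u_t, u_{tt}$ are evaluated at $(x, \tau)$. -/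
open Real MeasureTheory Filter

/-- The Euclidean Laplacian on the product `ℝⁿ × ℝᴺ`. -/
noncomputable def lap2 {n N : ℕ}
    (g : EuclideanSpace ℝ (Fin n) × EuclideanSpace ℝ (Fin N) → ℝ)
    (z : EuclideanSpace ℝ (Fin n) × EuclideanSpace ℝ (Fin N)) : ℝ :=
  (∑ i : Fin n, iteratedFDeriv ℝ 2 g z
      ![(EuclideanSpace.single i 1, 0), (EuclideanSpace.single i 1, 0)]) +
    ∑ j : Fin N, iteratedFDeriv ℝ 2 g z
      ![((0 : EuclideanSpace ℝ (Fin n)), EuclideanSpace.single j 1),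
        ((0 : EuclideanSpace ℝ (Fin n)), EuclideanSpace.single j 1)]

lemma deriv2_const_mul (c : ℝ) (g : ℝ → ℝ) :
    deriv (fun t : ℝ => deriv (fun s : ℝ => c * g s) t) 0 = c * deriv (fun t => deriv g t) 0 := by
  have h : (fun t : ℝ => deriv (fun s : ℝ => c * g s) t) = fun t => c * deriv g t :=
    funext fun t => deriv_const_mul_field c
  rw [h, deriv_const_mul_field]

lemma line_second (C b r0 : ℝ) (hr0 : 0 < r0) (φ φ' φ'' : ℝ → ℝ)
    (hφd : ∀ r, 0 < r → HasDerivAt φ (φ' r) r)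
    (hφd2 : ∀ r, 0 < r → HasDerivAt φ' (φ'' r) r) :
    deriv (fun t : ℝ => deriv (fun s : ℝ => C * φ (r0 + 2*b*s + s^2)) t) 0
      = C * (4*b^2*φ'' r0 + 2*φ' r0) := by
  set q : ℝ → ℝ := fun s => r0 + 2*b*s + s^2 with hq
  have hqd : ∀ t, HasDerivAt q (2*b + 2*t) t := by
    intro t
    have := (((hasDerivAt_id t).const_mul (2*b)).const_add r0).add (hasDerivAt_pow 2 t)
    simpa [hq, Pi.add_def] using this
  have hq0 : q 0 = r0 := by simp [hq]
  have hqc : Continuous q := by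
    rw [hq]; continuity
  have hev : (fun t : ℝ => deriv (fun s : ℝ => C * φ (q s)) t) =ᶠ[nhds 0]
      (fun t : ℝ => C * (φ' (q t) * (2*b + 2*t))) := by
    have hT : IsOpen {t : ℝ | 0 < q t} := isOpen_lt continuous_const hqc
    have h0 : (0:ℝ) ∈ {t : ℝ | 0 < q t} := by simp [hq0, hr0]
    filter_upwards [hT.mem_nhds h0] with t ht
    exact (((hφd (q t) ht).comp t (hqd t)).const_mul C).deriv
  rw [hev.deriv_eq]
  have h1 : HasDerivAt (fun t => φ' (q t)) (φ'' r0 * (2*b + 2*0)) 0 := by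
    have := (hφd2 (q 0) (by simp [hq0, hr0])).comp 0 (hqd 0)
    rwa [hq0] at this
  have h2 : HasDerivAt (fun t : ℝ => 2*b + 2*t) 2 0 := by
    simpa using ((hasDerivAt_id (0:ℝ)).const_mul 2).const_add (2*b)
  have h3 := ((h1.mul h2).const_mul C).deriv
  simp only [Pi.mul_def] at h3
  rw [h3, hq0]
  ring

lemma secondDeriv_line {E : Type*} [NormedAddCommGroup E] [NormedSpace ℝ E]
    {f : E → ℝ} {z : E} (w : E) (hf : ContDiffAt ℝ 2 f z) :
    iteratedFDeriv ℝ 2 f z ![w, w] =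
      deriv (fun t : ℝ => deriv (fun s : ℝ => f (z + s • w)) t) 0 := by
  rw [iteratedFDeriv_two_apply]
  simp only [Matrix.cons_val_zero, Matrix.cons_val_one, Matrix.head_cons]
  have h2 : ContDiffWithinAt ℝ 2 f Set.univ z := hf
  obtain ⟨u, hu, hfu⟩ := (contDiffWithinAt_iff_contDiffOn_nhds (by norm_num)).1 h2
  rw [Set.insert_eq_self.2 (Set.mem_univ z), nhdsWithin_univ] at hu
  set U := interior u with hU
  have hUo : IsOpen U := isOpen_interior
  have hzU : z ∈ U := mem_interior_iff_mem_nhds.2 hu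
  have hfU : ContDiffOn ℝ 2 f U := hfu.mono interior_subset
  have hline : ∀ t : ℝ, HasDerivAt (fun s : ℝ => z + s • w) w t := by
    intro t
    have := ((hasDerivAt_id t).smul_const w).const_add z
    simpa using this
  have hd : ∀ p ∈ U, DifferentiableAt ℝ f p := fun p hp =>
    (hfU.differentiableOn (by norm_num)).differentiableAt (hUo.mem_nhds hp)
  have hev : (fun t : ℝ => deriv (fun s : ℝ => f (z + s • w)) t) =ᶠ[nhds 0]
      (fun t : ℝ => fderiv ℝ f (z + t • w) w) := by
    have hc : Continuous (fun t : ℝ => z + t • w) := by continuity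
    have hT : IsOpen {t : ℝ | z + t • w ∈ U} := hUo.preimage hc
    have h0 : (0 : ℝ) ∈ {t : ℝ | z + t • w ∈ U} := by simpa using hzU
    filter_upwards [hT.mem_nhds h0] with t ht
    exact ((hd _ ht).hasFDerivAt.comp_hasDerivAt t (hline t)).deriv
  rw [hev.deriv_eq]
  have hdf : DifferentiableAt ℝ (fderiv ℝ f) z :=
    (hf.fderiv_right (m := 1) (by norm_num)).differentiableAt one_ne_zero
  have h1 : HasDerivAt (fun t : ℝ => fderiv ℝ f (z + t • w)) (fderiv ℝ (fderiv ℝ f) z w) 0 := by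
    have hF : HasFDerivAt (fderiv ℝ f) (fderiv ℝ (fderiv ℝ f) z) (z + (0:ℝ) • w) := by
      simpa using hdf.hasFDerivAt
    have := hF.comp_hasDerivAt 0 (hline 0)
    simpa [Function.comp_def] using this
  have h2' : HasDerivAt (fun t : ℝ => fderiv ℝ f (z + t • w) w)
      (fderiv ℝ (fderiv ℝ f) z w w) 0 := by
    have := ((ContinuousLinearMap.apply ℝ ℝ w).hasFDerivAt).comp_hasDerivAt 0 h1
    simpa [Function.comp_def] using this
  exact h2'.deriv.symm

/-- Perelman'"'"'s observation: for a positive heat equation solution `u` on `ℝⁿ` and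
`v(x,y) = (2N)^(-n/2) |y|^(2-N) u(x, |y|²/(2N))` on `ℝⁿ × (ℝᴺ \ {0})`,
`Δv/v = 4uₜ/(Nu) + 2τ uₜₜ/(Nu)` with `τ = |y|²/(2N)`. -/
theorem stmt_12 (n N : ℕ) (hN : 3 ≤ N)
    (u : EuclideanSpace ℝ (Fin n) → ℝ → ℝ)
    (hsmooth : ContDiffOn ℝ (⊤ : ℕ∞) (fun p : EuclideanSpace ℝ (Fin n) × ℝ => u p.1 p.2)
      (Set.univ ×ˢ Set.Ioi (0 : ℝ)))
    (hpos : ∀ x t, 0 < t → 0 < u x t)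
    (heat : ∀ x t, 0 < t → deriv (u x) t = lap (fun y => u y t) x)
    (v : EuclideanSpace ℝ (Fin n) × EuclideanSpace ℝ (Fin N) → ℝ)
    (hv : ∀ x y, v (x, y) =
      (2 * N : ℝ) ^ (-(n : ℝ) / 2) * ‖y‖ ^ (2 - (N : ℝ)) * u x (‖y‖ ^ 2 / (2 * N)))
    (x : EuclideanSpace ℝ (Fin n)) (y : EuclideanSpace ℝ (Fin N)) (hy : y ≠ 0)
    (τ : ℝ) (hτ : τ = ‖y‖ ^ 2 / (2 * N)) :
    lap2 v (x, y) / v (x, y) =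
      4 * deriv (u x) τ / (N * u x τ) + 2 * τ * deriv (deriv (u x)) τ / (N * u x τ) := by
  have hN0 : (0:ℝ) < N := by positivity
  have hyn : ‖y‖ ≠ 0 := norm_ne_zero_iff.2 hy
  set C : ℝ := (2 * N : ℝ) ^ (-(n : ℝ) / 2) with hC
  set a : ℝ := (2 - (N:ℝ)) / 2 with ha
  set r0 : ℝ := ‖y‖ ^ 2 with hr0def
  have hr0 : 0 < r0 := by positivity
  have hτpos : 0 < τ := by rw [hτ]; positivity
  have hCpos : 0 < C := Real.rpow_pos_of_pos (by positivity) _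
  set W : EuclideanSpace ℝ (Fin n) × ℝ → ℝ := fun p => u p.1 p.2 with hW
  have hΩ : IsOpen ((Set.univ : Set (EuclideanSpace ℝ (Fin n))) ×ˢ Set.Ioi (0:ℝ)) := isOpen_univ.prod isOpen_Ioi
  have hW2 : ContDiffOn ℝ 2 W (Set.univ ×ˢ Set.Ioi (0:ℝ)) := hsmooth.of_le (WithTop.coe_le_coe.2 le_top)
  -- key rpow identity
  have key : ∀ z : EuclideanSpace ℝ (Fin N), ‖z‖ ^ (2 - (N:ℝ)) = (‖z‖ ^ 2 : ℝ) ^ a := by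
    intro z
    rw [← Real.rpow_natCast ‖z‖ 2, ← Real.rpow_mul (norm_nonneg z)]
    congr 1
    rw [ha]; push_cast; ring
  -- v as explicit formula
  have veq : v = fun p => C * ‖p.2‖ ^ (2 - (N:ℝ)) * u p.1 (‖p.2‖ ^ 2 / (2 * N)) := by
    funext p
    conv_lhs => rw [← Prod.mk.eta (p := p)]
    exact hv p.1 p.2
  -- smoothness of v at (x,y)
  have hWat : ContDiffAt ℝ 2 W (x, ‖y‖ ^ 2 / (2 * N)) :=
    hW2.contDiffAt (hΩ.mem_nhds ⟨Set.mem_univ _, Set.mem_Ioi.2 (by positivity)⟩)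
  have hvsm : ContDiffAt ℝ 2 v (x, y) := by
    rw [veq]
    have h1 : ContDiffAt ℝ 2 (fun p : EuclideanSpace ℝ (Fin n) × EuclideanSpace ℝ (Fin N) =>
        ‖p.2‖ ^ (2 - (N:ℝ))) (x, y) := by
      have hnrm : ContDiffAt ℝ 2 (fun p : EuclideanSpace ℝ (Fin n) × EuclideanSpace ℝ (Fin N) =>
          ‖p.2‖) (x, y) := (contDiffAt_norm (𝕜 := ℝ) hy).comp (x, y) contDiffAt_snd
      exact (Real.contDiffAt_rpow_const_of_ne hyn).comp (x, y) hnrm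
    have h2 : ContDiffAt ℝ 2 (fun p : EuclideanSpace ℝ (Fin n) × EuclideanSpace ℝ (Fin N) =>
        u p.1 (‖p.2‖ ^ 2 / (2 * N))) (x, y) := by
      have hg : ContDiffAt ℝ 2 (fun p : EuclideanSpace ℝ (Fin n) × EuclideanSpace ℝ (Fin N) =>
          (p.1, ‖p.2‖ ^ 2 / (2 * N))) (x, y) :=
        contDiffAt_fst.prodMk (((contDiff_norm_sq ℝ).contDiffAt.comp (x,y) contDiffAt_snd).div_const _)
      exact hWat.comp (x, y) hg
    exact (contDiffAt_const.mul h1).mul h2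
  -- smoothness of u slices
  have hUsm : ContDiffOn ℝ 2 (u x) (Set.Ioi (0:ℝ)) := by
    have := hW2.comp (f := fun t : ℝ => (x, t)) ((contDiff_const.prodMk contDiff_id).contDiffOn)
      (fun t ht => ⟨Set.mem_univ _, ht⟩)
    exact this
  have hU' : ∀ t, 0 < t → HasDerivAt (u x) (deriv (u x) t) t := fun t ht =>
    ((hUsm.differentiableOn (by norm_num)).differentiableAt (isOpen_Ioi.mem_nhds ht)).hasDerivAt
  have hU'sm : ContDiffOn ℝ 1 (deriv (u x)) (Set.Ioi (0:ℝ)) :=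
    hUsm.deriv_of_isOpen isOpen_Ioi (by norm_num)
  have hU'' : ∀ t, 0 < t → HasDerivAt (deriv (u x)) (deriv (deriv (u x)) t) t := fun t ht =>
    ((hU'sm.differentiableOn one_ne_zero).differentiableAt (isOpen_Ioi.mem_nhds ht)).hasDerivAt
  have hfx : ContDiffAt ℝ 2 (fun x' => u x' τ) x := by
    have hWτ : ContDiffAt ℝ 2 W (x, τ) :=
      hW2.contDiffAt (hΩ.mem_nhds ⟨Set.mem_univ _, hτpos⟩)
    exact hWτ.comp x (contDiff_id.prodMk contDiff_const).contDiffAt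
  -- x-direction slice smoothness done (hfx). Now the derivative functions for the radial part.
  have hg : ∀ r : ℝ, 0 < r → HasDerivAt (fun r : ℝ => u x (r / (2 * N)))
      (deriv (u x) (r / (2 * N)) * (1 / (2 * N))) r := by
    intro r hr
    have h1 : HasDerivAt (fun r : ℝ => r / (2 * N)) (1 / (2 * N)) r := by
      simpa using (hasDerivAt_id r).div_const (2 * N)
    exact (hU' _ (by positivity)).comp r h1
  have hg' : ∀ r : ℝ, 0 < r → HasDerivAt (fun r : ℝ => deriv (u x) (r / (2 * N)) * (1 / (2 * N)))
      ((deriv (deriv (u x)) (r / (2 * N)) * (1 / (2 * N))) * (1 / (2 * N))) r := by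
    intro r hr
    have h1 : HasDerivAt (fun r : ℝ => r / (2 * N)) (1 / (2 * N)) r := by
      simpa using (hasDerivAt_id r).div_const (2 * N)
    exact ((hU'' _ (by positivity)).comp r h1).mul_const (1 / (2 * N))
  set φ0 : ℝ → ℝ := fun r => r ^ a * u x (r / (2 * N)) with hφ0
  set φ1 : ℝ → ℝ := fun r =>
    a * r ^ (a - 1) * u x (r / (2 * N)) + r ^ a * (deriv (u x) (r / (2 * N)) * (1 / (2 * N)))
    with hφ1
  set φ2 : ℝ → ℝ := fun r =>
    (a * ((a - 1) * r ^ (a - 1 - 1))) * u x (r / (2 * N))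
      + (a * r ^ (a - 1)) * (deriv (u x) (r / (2 * N)) * (1 / (2 * N)))
      + ((a * r ^ (a - 1)) * (deriv (u x) (r / (2 * N)) * (1 / (2 * N)))
        + r ^ a * ((deriv (deriv (u x)) (r / (2 * N)) * (1 / (2 * N))) * (1 / (2 * N))))
    with hφ2
  have hφd : ∀ r : ℝ, 0 < r → HasDerivAt φ0 (φ1 r) r := by
    intro r hr
    simp only [hφ0, hφ1]
    exact (Real.hasDerivAt_rpow_const (p := a) (Or.inl hr.ne')).mul (hg r hr)
  have hφd2 : ∀ r : ℝ, 0 < r → HasDerivAt φ1 (φ2 r) r := by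
    intro r hr
    simp only [hφ1, hφ2]
    exact (((Real.hasDerivAt_rpow_const (p := a - 1) (Or.inl hr.ne')).const_mul a).mul
      (hg r hr)).add ((Real.hasDerivAt_rpow_const (p := a) (Or.inl hr.ne')).mul (hg' r hr))
  -- the x-part
  have hxterm : ∀ i : Fin n,
      iteratedFDeriv ℝ 2 v (x, y)
        ![(EuclideanSpace.single i 1, 0), (EuclideanSpace.single i 1, 0)] =
      (C * r0 ^ a) * iteratedFDeriv ℝ 2 (fun x' => u x' τ) x
        ![EuclideanSpace.single i 1, EuclideanSpace.single i 1] := by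
    intro i
    rw [secondDeriv_line _ hvsm, secondDeriv_line _ hfx]
    have hslice : (fun s : ℝ => v ((x, y) + s • ((EuclideanSpace.single i 1 :
        EuclideanSpace ℝ (Fin n)), (0 : EuclideanSpace ℝ (Fin N))))) =
        fun s : ℝ => (C * r0 ^ a) * (fun x' => u x' τ) (x + s • EuclideanSpace.single i 1) := by
      funext s
      have hpt : (x, y) + s • ((EuclideanSpace.single i 1 : EuclideanSpace ℝ (Fin n)),
          (0 : EuclideanSpace ℝ (Fin N))) = (x + s • EuclideanSpace.single i 1, y) := by
        simp [Prod.ext_iff]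
      rw [hpt, veq]
      simp only
      rw [key y, ← hr0def, ← hτ]
    rw [hslice]
    exact deriv2_const_mul _ _
  have hxsum : (∑ i : Fin n, iteratedFDeriv ℝ 2 v (x, y)
        ![(EuclideanSpace.single i 1, 0), (EuclideanSpace.single i 1, 0)]) =
      (C * r0 ^ a) * deriv (u x) τ := by
    rw [Finset.sum_congr rfl (fun i _ => hxterm i), ← Finset.mul_sum]
    have : (∑ i : Fin n, iteratedFDeriv ℝ 2 (fun x' => u x' τ) x
        ![EuclideanSpace.single i 1, EuclideanSpace.single i 1]) = lap (fun x' => u x' τ) x := rfl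
    rw [this, ← heat x τ hτpos]
  -- the y-part
  have hyterm : ∀ j : Fin N,
      iteratedFDeriv ℝ 2 v (x, y)
        ![((0 : EuclideanSpace ℝ (Fin n)), EuclideanSpace.single j 1),
          ((0 : EuclideanSpace ℝ (Fin n)), EuclideanSpace.single j 1)] =
      C * (4 * (y j)^2 * φ2 r0 + 2 * φ1 r0) := by
    intro j
    rw [secondDeriv_line _ hvsm]
    have hslq : ∀ s : ℝ, ‖y + s • (EuclideanSpace.single j 1 : EuclideanSpace ℝ (Fin N))‖ ^ 2
        = r0 + 2 * (y j) * s + s ^ 2 := by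
      intro s
      rw [norm_add_sq_real, real_inner_smul_right, norm_smul]
      simp only [EuclideanSpace.inner_single_right, EuclideanSpace.norm_single, norm_one,
        mul_one, conj_trivial, Real.norm_eq_abs, mul_pow, sq_abs, one_pow]
      rw [← hr0def]
      ring
    have hslice : (fun s : ℝ => v ((x, y) + s • ((0 : EuclideanSpace ℝ (Fin n)),
        EuclideanSpace.single j 1))) =
        fun s : ℝ => C * φ0 (r0 + 2 * (y j) * s + s ^ 2) := by
      funext s
      have hpt : (x, y) + s • ((0 : EuclideanSpace ℝ (Fin n)), EuclideanSpace.single j 1)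
          = (x, y + s • EuclideanSpace.single j 1) := by
        simp [Prod.ext_iff]
      rw [hpt, veq]
      simp only [hφ0]
      rw [key, hslq s]
      ring
    rw [hslice]
    exact line_second C (y j) r0 hr0 φ0 φ1 φ2 hφd hφd2
  have hysum : (∑ j : Fin N, iteratedFDeriv ℝ 2 v (x, y)
        ![((0 : EuclideanSpace ℝ (Fin n)), EuclideanSpace.single j 1),
          ((0 : EuclideanSpace ℝ (Fin n)), EuclideanSpace.single j 1)]) =
      (C * 4 * φ2 r0) * r0 + (N : ℝ) * (C * (2 * φ1 r0)) := by
    rw [Finset.sum_congr rfl (fun j _ => hyterm j)]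
    have hsq : (∑ j : Fin N, (y j) ^ 2) = r0 := by
      rw [hr0def, EuclideanSpace.norm_eq, Real.sq_sqrt (by positivity)]
      simp [Real.norm_eq_abs, sq_abs]
    have step : ∀ j : Fin N, C * (4 * (y j)^2 * φ2 r0 + 2 * φ1 r0)
        = (C * 4 * φ2 r0) * (y j)^2 + C * (2 * φ1 r0) := by intro j; ring
    rw [Finset.sum_congr rfl (fun j _ => step j), Finset.sum_add_distrib, ← Finset.mul_sum,
      hsq, Finset.sum_const, Finset.card_univ, Fintype.card_fin, nsmul_eq_mul]
  -- assemble
  have hlap2 : lap2 v (x, y) = (C * r0 ^ a) * deriv (u x) τ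
      + ((C * 4 * φ2 r0) * r0 + (N : ℝ) * (C * (2 * φ1 r0))) := by
    rw [lap2, hxsum, hysum]
  have hvval : v (x, y) = C * r0 ^ a * u x τ := by
    rw [hv x y, key y, ← hr0def, ← hτ]
  rw [hlap2, hvval]
  -- final algebra
  have hrτ : r0 / (2 * N) = τ := hτ.symm
  have hA : (0:ℝ) < r0 ^ a := Real.rpow_pos_of_pos hr0 a
  have hP : 0 < u x τ := hpos x τ hτpos
  have e1 : r0 ^ (a - 1) = r0 ^ a / r0 := by
    rw [Real.rpow_sub hr0, Real.rpow_one]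
  have e2 : r0 ^ (a - 1 - 1) = r0 ^ a / r0 / r0 := by
    rw [Real.rpow_sub hr0, Real.rpow_sub hr0, Real.rpow_one]
  have hr0τ : r0 = 2 * N * τ := by
    rw [hτ]; field_simp
  simp only [hφ1, hφ2]
  rw [hrτ, e1, e2, ha]
  rw [hr0τ]
  have hτ0 : τ ≠ 0 := hτpos.ne'
  have hN' : (N:ℝ) ≠ 0 := hN0.ne'
  have hAne : (2 * N * τ : ℝ) ^ a ≠ 0 := by
    rw [← hr0τ]; exact hA.ne'
  field_simp
  ring
end
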